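/- Let n ≥ 1 and let b = (b_1, ..., b_n) be a nonincreasing sequence of nonnegative integers with b_1 ≤ n-1. Then b is n-graphical if and only if (1) H_n = b_1 + ... + b_n is even, and (2) for every i with 1 ≤ i ≤ n such that i(i-1) < H_i, we have H_i ≤ i(i-1) + Σ_{k=i+1}^{n} min(i, b_k), where H_i = b_1 + ... + b_i. -/

import Mathlib

/-!
Necessity: for the set `S` of the first `i` vertices, at most `i(i-1)` degree units are spent on
edges inside `S`, and a vertex `k ∉ S` absorbs at most `min(i, b_k)` of the rest.

Sufficiency is Choudum's induction on `n + H_n`. A trailing zero is dropped. Otherwise lower by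
one both `b_n` and `b_p`, where `p < n` is the last index of the initial constant block; the
lowered sequence is still nonincreasing and satisfies the Erdős–Gallai inequalities (where both
lowered entries are counted on the right at `i < p`, parity supplies a slack of two; where only
`b_n` is, the inequality at `i + 1` supplies a slack of one). A realisation of it is turned into
one of `b` by adding the edge `pn`, or, if present, by trading an edge `uv` with `u ∉ N[p]`,
`v ∉ N[n]` for `pu` and `nv`.

The shortened criterion is the classical one, since the inequality at `i` is trivial when
`H_i ≤ i(i-1)`.
-/

/-- `b 1, …, b n` (1-indexed) is the degree sequence of a simple graph on `n` vertices. -/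
def IsGraphical (n : ℕ) (b : ℕ → ℕ) : Prop :=
  ∃ (G : SimpleGraph (Fin n)) (_ : DecidableRel G.Adj), ∀ i : Fin n, G.degree i = b (i.1 + 1)

open Finset

namespace SimpleGraph

section

variable {V : Type*} [Fintype V] [DecidableEq V] (G : SimpleGraph V) [DecidableRel G.Adj]

theorem degree_eq_card_filter_add_card_filter_compl (S : Finset V) (v : V) :
    G.degree v = #{w ∈ S | G.Adj v w} + #{w ∈ Sᶜ | G.Adj v w} := by
  rw [← card_neighborFinset_eq_degree, neighborFinset_eq_filter, card_filter, card_filter,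
    card_filter, sum_add_sum_compl]

theorem sum_degree_le (S : Finset V) :
    ∑ v ∈ S, G.degree v ≤ #S * (#S - 1) + ∑ w ∈ Sᶜ, min #S (G.degree w) := by
  have hinner : ∀ v ∈ S, #{w ∈ S | G.Adj v w} ≤ #S - 1 := fun v hv => by
    rw [← card_erase_of_mem hv]
    exact card_le_card fun w hw => by
      simp only [mem_filter] at hw
      exact mem_erase.2 ⟨hw.2.ne.symm, hw.1⟩
  have hcross : ∑ v ∈ S, #{w ∈ Sᶜ | G.Adj v w} = ∑ w ∈ Sᶜ, #{v ∈ S | G.Adj w v} := by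
    simp only [card_filter]
    rw [sum_comm]
    simp only [G.adj_comm]
  have houter : ∀ w ∈ Sᶜ, #{v ∈ S | G.Adj w v} ≤ min #S (G.degree w) := fun w _ =>
    le_min (card_filter_le _ _)
      ((G.degree_eq_card_filter_add_card_filter_compl S w).symm ▸ Nat.le_add_right _ _)
  calc ∑ v ∈ S, G.degree v
      = ∑ v ∈ S, #{w ∈ S | G.Adj v w} + ∑ v ∈ S, #{w ∈ Sᶜ | G.Adj v w} := by
        rw [← sum_add_distrib]
        exact sum_congr rfl fun v _ => G.degree_eq_card_filter_add_card_filter_compl S v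
    _ ≤ ∑ _v ∈ S, (#S - 1) + ∑ w ∈ Sᶜ, min #S (G.degree w) := by
        rw [hcross]
        exact add_le_add (sum_le_sum hinner) (sum_le_sum houter)
    _ = #S * (#S - 1) + ∑ w ∈ Sᶜ, min #S (G.degree w) := by rw [sum_const, smul_eq_mul]

theorem degree_edge {a b : V} (hab : a ≠ b) (w : V) :
    (edge a b).degree w = (if w = a then 1 else 0) + (if w = b then 1 else 0) := by
  rw [← card_neighborFinset_eq_degree]
  by_cases hwa : w = a
  · subst hwa
    rw [show (edge w b).neighborFinset w = {b} by ext; simp [edge_adj]; grind]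
    simp [hab]
  by_cases hwb : w = b
  · subst hwb
    rw [show (edge a w).neighborFinset w = {a} by ext; simp [edge_adj]; grind]
    simp [hwa]
  · rw [show (edge a b).neighborFinset w = ∅ by ext; simp [edge_adj, hwa, hwb]]
    simp [hwa, hwb]

theorem degree_sup_edge {a b : V} (hab : a ≠ b) (h : ¬G.Adj a b) (w : V) :
    (G ⊔ edge a b).degree w = G.degree w + (if w = a then 1 else 0) + (if w = b then 1 else 0) := by
  rw [add_assoc, ← degree_edge hab, ← card_neighborFinset_eq_degree,
    neighborFinset_sup, card_union_of_disjoint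
      (disjoint_neighborFinset_of_disjoint _ _ _ (G.disjoint_edge.2 h)),
    card_neighborFinset_eq_degree, card_neighborFinset_eq_degree]

theorem degree_sdiff_edge {a b : V} (h : G.Adj a b) (w : V) :
    (G \ edge a b).degree w + (if w = a then 1 else 0) + (if w = b then 1 else 0) = G.degree w := by
  have hle : (edge a b).neighborFinset w ⊆ G.neighborFinset w := fun x hx => by
    rw [mem_neighborFinset, edge_adj] at hx
    rcases hx with ⟨⟨rfl, rfl⟩ | ⟨rfl, rfl⟩, -⟩
    · simpa using h
    · simpa using h.symm
  rw [add_assoc, ← degree_edge h.ne, ← card_neighborFinset_eq_degree, neighborFinset_sdiff,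
    card_sdiff_of_subset hle, card_neighborFinset_eq_degree, card_neighborFinset_eq_degree,
    Nat.sub_add_cancel (by simpa using card_le_card hle)]

theorem exists_ne_not_adj_of_degree_add_one_lt {p : V} (hp : G.degree p + 1 < Fintype.card V) :
    ∃ u, u ≠ p ∧ ¬G.Adj p u := by
  have hcard : #(insert p (G.neighborFinset p)) < #(univ : Finset V) :=
    (card_insert_le _ _).trans_lt (by rwa [card_neighborFinset_eq_degree, card_univ])
  obtain ⟨u, -, hu⟩ := exists_mem_notMem_of_card_lt_card hcard
  simp only [mem_insert, mem_neighborFinset, not_or] at hu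
  exact ⟨u, hu⟩

theorem exists_adj_not_adj_of_degree_lt {q u : V} (h : G.degree q < G.degree u) :
    ∃ v, G.Adj u v ∧ v ≠ q ∧ ¬G.Adj q v := by
  by_contra! hcon
  have hsub : (G.neighborFinset u).erase q ⊆ (G.neighborFinset q).erase u := fun v hv => by
    simp only [mem_erase, mem_neighborFinset] at hv ⊢
    exact ⟨(G.ne_of_adj hv.2).symm, hcon v hv.2 hv.1⟩
  have hcard := card_le_card hsub
  simp only [card_erase_eq_ite, mem_neighborFinset, card_neighborFinset_eq_degree,
    G.adj_comm u q] at hcard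
  split_ifs at hcard with hqu
  · have := hqu.degree_pos_left
    omega
  · omega

theorem exists_degree_eq_add_ite_add_ite {p q : V} (hpq : p ≠ q)
    (hp : G.degree p + 1 < Fintype.card V) (hq : ∀ w, w ≠ p → w ≠ q → G.degree q < G.degree w) :
    ∃ (G' : SimpleGraph V) (_ : DecidableRel G'.Adj), ∀ w,
      G'.degree w = G.degree w + (if w = p then 1 else 0) + (if w = q then 1 else 0) := by
  by_cases hadj : G.Adj p q
  swap
  · exact ⟨G ⊔ edge p q, inferInstance, G.degree_sup_edge hpq hadj⟩
  obtain ⟨u, hup, hpu⟩ := G.exists_ne_not_adj_of_degree_add_one_lt hp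
  have huq : u ≠ q := by rintro rfl; exact hpu hadj
  obtain ⟨v, huv, hvq, hqv⟩ := G.exists_adj_not_adj_of_degree_lt (hq u hup huq)
  set G₁ := G \ edge u v
  set G₂ := G₁ ⊔ edge p u
  have h₁ : ¬G₁.Adj p u := fun h => hpu (sdiff_le (α := SimpleGraph V) h)
  have h₂ : ¬G₂.Adj q v := by simp [G₂, G₁, edge_adj, hqv, hpq.symm, huq.symm]
  refine ⟨G₂ ⊔ edge q v, inferInstance, fun w => ?_⟩
  rw [G₂.degree_sup_edge hvq.symm h₂, G₁.degree_sup_edge hup.symm h₁,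
    ← G.degree_sdiff_edge huv w]
  ring

end

variable {V W : Type*} (G : SimpleGraph V) (f : V ↪ W) [Fintype W] [DecidableRel (G.map f).Adj]

theorem degree_map_apply [Fintype V] [DecidableRel G.Adj] (v : V) :
    (G.map f).degree (f v) = G.degree v := by
  classical
  rw [← card_neighborFinset_eq_degree, ← card_neighborFinset_eq_degree,
    show (G.map f).neighborFinset (f v) = (G.neighborFinset v).map f by ext; simp [eq_comm]]
  exact card_map f

theorem degree_map_eq_zero {w : W} (hw : w ∉ Set.range f) : (G.map f).degree w = 0 := by
  rw [degree_eq_zero]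
  rintro v ⟨-, a, b, -, rfl, -⟩
  exact hw ⟨a, rfl⟩

end SimpleGraph

theorem Fin.sum_filter_lt_eq_sum_Icc {n i : ℕ} (hi : i ≤ n) (g : ℕ → ℕ) :
    ∑ v : Fin n with v.1 < i, g (v + 1) = ∑ k ∈ Icc 1 i, g k := by
  rw [sum_filter, Fin.sum_univ_eq_sum_range (fun k => if k < i then g (k + 1) else 0),
    ← sum_filter, show (range n).filter (· < i) = range i by ext; simp; omega,
    range_eq_Ico, sum_Ico_add' g 0 i 1, zero_add, Ico_add_one_right_eq_Icc]

theorem Fin.sum_filter_not_lt_eq_sum_Icc (n i : ℕ) (g : ℕ → ℕ) :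
    ∑ v : Fin n with ¬v.1 < i, g (v + 1) = ∑ k ∈ Icc (i + 1) n, g k := by
  rw [sum_filter, Fin.sum_univ_eq_sum_range (fun k => if ¬k < i then g (k + 1) else 0),
    ← sum_filter, show (range n).filter (¬· < i) = Ico i n by ext; simp; omega,
    sum_Ico_add' g i n 1, Ico_add_one_right_eq_Icc]

theorem sum_Icc_one_add_sum_Icc (f : ℕ → ℕ) {i n : ℕ} (h : i ≤ n) :
    ∑ k ∈ Icc 1 i, f k + ∑ k ∈ Icc (i + 1) n, f k = ∑ k ∈ Icc 1 n, f k := by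
  simpa only [← Icc_add_one_left_eq_Ioc, zero_add] using sum_Ioc_consecutive f (Nat.zero_le i) h

theorem sum_Icc_eq_add_sum_Icc (f : ℕ → ℕ) {a n : ℕ} (h : a ≤ n) :
    ∑ k ∈ Icc a n, f k = f a + ∑ k ∈ Icc (a + 1) n, f k := by
  rw [Icc_add_one_left_eq_Ioc, add_sum_Ioc_eq_sum_Icc h]

theorem sum_eq_add_ite_add_ite {s : Finset ℕ} {f g : ℕ → ℕ} {p q a b : ℕ}
    (h : ∀ k, g k = f k + (if k = p then a else 0) + (if k = q then b else 0)) :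
    ∑ k ∈ s, g k = ∑ k ∈ s, f k + (if p ∈ s then a else 0) + (if q ∈ s then b else 0) := by
  simp [h, sum_add_distrib]

theorem sum_Icc_one_eq_mul {f : ℕ → ℕ} {i c : ℕ} (h : ∀ k ∈ Icc 1 i, f k = c) :
    ∑ k ∈ Icc 1 i, f k = i * c := by
  simp [sum_const_nat h]

def erdosGallaiBound (n : ℕ) (d : ℕ → ℕ) (i : ℕ) : ℕ :=
  i * (i - 1) + ∑ k ∈ Icc (i + 1) n, min i (d k)

namespace IsGraphical

variable {n : ℕ} {d : ℕ → ℕ}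

theorem even_sum (h : IsGraphical n d) : Even (∑ k ∈ Icc 1 n, d k) := by
  obtain ⟨G, _, hG⟩ := h
  have hsum := Fin.sum_filter_lt_eq_sum_Icc (le_refl n) d
  simp only [Fin.is_lt, filter_true] at hsum
  rw [← hsum, ← sum_congr rfl fun v _ => hG v, G.sum_degrees_eq_twice_card_edges]
  exact even_two_mul _

theorem sum_le_erdosGallaiBound (h : IsGraphical n d) {i : ℕ} (hi : i ≤ n) :
    ∑ k ∈ Icc 1 i, d k ≤ erdosGallaiBound n d i := by
  obtain ⟨G, _, hG⟩ := h
  set S : Finset (Fin n) := {v | v.1 < i}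
  have hS : #S = i := by
    simpa using Fin.sum_filter_lt_eq_sum_Icc hi (fun _ => 1)
  have hbound := G.sum_degree_le S
  simp only [hS, hG, S, compl_filter] at hbound
  rwa [Fin.sum_filter_lt_eq_sum_Icc hi d,
    Fin.sum_filter_not_lt_eq_sum_Icc n i (fun k => min i (d k))] at hbound

theorem succ_of_eq_zero (h : IsGraphical n d) (hd : d (n + 1) = 0) : IsGraphical (n + 1) d := by
  obtain ⟨G, _, hG⟩ := h
  refine ⟨G.map Fin.castSuccEmb, inferInstance, Fin.lastCases ?_ fun v => ?_⟩
  · rw [SimpleGraph.degree_map_eq_zero _ _ (by simp), Fin.val_last, hd]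
  · rw [← Fin.coe_castSuccEmb, SimpleGraph.degree_map_apply, hG]
    rfl

theorem of_eq_add_ite {p : ℕ} {d' : ℕ → ℕ} (h : IsGraphical n d') (hp : 1 ≤ p)
    (hpn : p < n) (hd : ∀ k, d k = d' k + (if k = p then 1 else 0) + (if k = n then 1 else 0))
    (hdp : d p < n) (hdn : ∀ k ∈ Set.Icc 1 n, k ≠ p → d n ≤ d k) : IsGraphical n d := by
  obtain ⟨G, _, hG⟩ := h
  have hdeg : ∀ k (hk : k ∈ Set.Icc 1 n), G.degree ⟨k - 1, by grind⟩ = d' k := fun k hk => by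
    rw [hG]
    congr
    grind
  obtain ⟨G', _, hG'⟩ := G.exists_degree_eq_add_ite_add_ite
    (p := ⟨p - 1, by omega⟩) (q := ⟨n - 1, by omega⟩) (by simp [Fin.ext_iff]; omega)
    (by
      have := hd p
      rw [hdeg p ⟨hp, hpn.le⟩, Fintype.card_fin]
      split_ifs at this <;> omega)
    (fun w hwp hwn => by
      have := hd n
      have := hd (w + 1)
      have := hdn (w + 1) ⟨by omega, w.2⟩
      rw [hdeg n ⟨by omega, le_rfl⟩, hG]
      simp only [ne_eq, Fin.ext_iff] at hwp hwn
      split_ifs at * <;> omega)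
  refine ⟨G', inferInstance, fun w => ?_⟩
  rw [hG', hG, hd (w + 1)]
  simp only [Fin.ext_iff]
  split_ifs <;> omega

end IsGraphical

section ErdosGallai

variable {n : ℕ} {d : ℕ → ℕ}

theorem erdosGallaiBound_one_le : erdosGallaiBound n d 1 ≤ n - 1 := by
  unfold erdosGallaiBound
  have := sum_le_sum (s := Icc (1 + 1) n) fun k _ => min_le_left 1 (d k)
  simpa using this

theorem erdosGallaiBound_succ_of_eq_zero (hd : d (n + 1) = 0) {i : ℕ} (hi : i ≤ n) :
    erdosGallaiBound (n + 1) d i = erdosGallaiBound n d i := by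
  simp [erdosGallaiBound, sum_Icc_succ_top (show i + 1 ≤ n + 1 by omega), hd]

theorem sum_add_two_le_erdosGallaiBound (hmono : AntitoneOn d (Set.Icc 1 n))
    (heven : Even (∑ k ∈ Icc 1 n, d k)) {i : ℕ} (hin : i + 2 ≤ n)
    (hconst : ∀ k ∈ Icc 1 (i + 1), d k = d 1) (hdi : d 1 ≤ i) (hdn : 1 ≤ d n) :
    ∑ k ∈ Icc 1 i, d k + 2 ≤ erdosGallaiBound n d i := by
  unfold erdosGallaiBound
  have hL : ∑ k ∈ Icc 1 i, d k = i * d 1 :=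
    sum_Icc_one_eq_mul fun k hk => hconst k (Icc_subset_Icc_right (by omega) hk)
  have htail : ∑ k ∈ Icc (i + 1) n, min i (d k) = ∑ k ∈ Icc (i + 1) n, d k :=
    sum_congr rfl fun k hk => by
      simp only [mem_Icc] at hk
      exact min_eq_right ((hmono ⟨le_rfl, by omega⟩ ⟨by omega, hk.2⟩ (by omega)).trans hdi)
  have hlow : d (i + 1) + d n ≤ ∑ k ∈ Icc (i + 1) n, d k := by
    rw [sum_Icc_eq_add_sum_Icc d (show i + 1 ≤ n by omega)]
    have := single_le_sum (f := d) (s := Icc (i + 1 + 1) n) (fun _ _ => Nat.zero_le _)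
      (mem_Icc.2 ⟨by omega, le_rfl⟩)
    omega
  have hdi1 := hconst (i + 1) (mem_Icc.2 ⟨by omega, le_rfl⟩)
  have hmul : i * d 1 ≤ i * (i - 1) + d 1 := by
    rcases i with _ | j
    · simp
    · simp only [add_tsub_cancel_right]
      nlinarith
  have hsplit := sum_Icc_one_add_sum_Icc d (show i ≤ n by omega)
  obtain ⟨a, ha⟩ := heven
  obtain ⟨b, hb⟩ := Nat.even_mul_pred_self i
  omega

theorem sum_lt_erdosGallaiBound {i : ℕ} (hin : i + 2 ≤ n)
    (hconst : ∀ k ∈ Icc 1 (i + 1), d k = d 1) (hdi : i < d 1) (hdn : 1 ≤ d n) (hdni : d n ≤ i)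
    (hEG : ∑ k ∈ Icc 1 (i + 1), d k ≤ erdosGallaiBound n d (i + 1)) :
    ∑ k ∈ Icc 1 i, d k < erdosGallaiBound n d i := by
  unfold erdosGallaiBound at *
  have hL : ∀ j ≤ i + 1, ∑ k ∈ Icc 1 j, d k = j * d 1 := fun j hj =>
    sum_Icc_one_eq_mul fun k hk => hconst k (Icc_subset_Icc_right hj hk)
  have hhead : ∑ k ∈ Icc (i + 1) n, min i (d k) = i + ∑ k ∈ Icc (i + 2) n, min i (d k) := by
    rw [sum_Icc_eq_add_sum_Icc _ (show i + 1 ≤ n by omega),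
      hconst (i + 1) (mem_Icc.2 ⟨by omega, le_rfl⟩), min_eq_left hdi.le]
  have hterm : ∀ x, i * min (i + 1) x ≤ (i + 1) * min i x := fun x => by
    rcases le_or_gt x i with h | h
    · rw [min_eq_right h, min_eq_right (by omega)]
      nlinarith
    · rw [min_eq_left h.le, min_eq_left h, Nat.mul_comm]
  -- the term `k = n` is strict, since `1 ≤ d n ≤ i`
  have htail : i * ∑ k ∈ Icc (i + 2) n, min (i + 1) (d k) <
      (i + 1) * ∑ k ∈ Icc (i + 2) n, min i (d k) := by
    rw [mul_sum, mul_sum]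
    refine sum_lt_sum (fun k _ => hterm (d k)) ⟨n, by simp; omega, ?_⟩
    rw [min_eq_right (by omega), min_eq_right hdni]
    nlinarith
  rw [hL i (by omega), hhead]
  rw [hL (i + 1) le_rfl, add_tsub_cancel_right] at hEG
  obtain ⟨j, rfl⟩ : ∃ j, i = j + 1 := ⟨i - 1, by omega⟩
  simp only [add_tsub_cancel_right] at hEG ⊢
  nlinarith

theorem exists_initial_constant_block (hmono : AntitoneOn d (Set.Icc 1 n)) (hn : 2 ≤ n) :
    ∃ p, 1 ≤ p ∧ p < n ∧ (∀ k ∈ Icc 1 p, d k = d 1) ∧ ∀ k, p < k → k < n → d k < d p := by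
  set p := Nat.findGreatest (fun k => d k = d 1) (n - 1)
  have hp1 : 1 ≤ p := Nat.le_findGreatest (by omega) rfl
  have hdp : d p = d 1 := Nat.findGreatest_spec (P := fun k => d k = d 1) (m := 1) (by omega) rfl
  have hpn : p ≤ n - 1 := Nat.findGreatest_le _
  refine ⟨p, hp1, by omega, fun k hk => ?_, fun k hpk hkn => ?_⟩
  · simp only [mem_Icc] at hk
    exact le_antisymm (hmono ⟨le_rfl, by omega⟩ ⟨hk.1, by omega⟩ hk.1)
      (hdp ▸ hmono ⟨hk.1, by omega⟩ ⟨hp1, by omega⟩ hk.2)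
  · exact lt_of_le_of_ne (hmono ⟨hp1, by omega⟩ ⟨by omega, by omega⟩ hpk.le)
      fun h => Nat.findGreatest_is_greatest hpk (by omega) (h.trans hdp)

variable {p : ℕ} {d' : ℕ → ℕ}

theorem antitoneOn_of_eq_add_ite (hmono : AntitoneOn d (Set.Icc 1 n)) (hpn : p < n)
    (hdrop : ∀ k, p < k → k < n → d k < d p)
    (hd : ∀ k, d k = d' k + (if k = p then 1 else 0) + (if k = n then 1 else 0)) :
    AntitoneOn d' (Set.Icc 1 n) := fun i hi j hj hij => by
  have hdij := hmono hi hj hij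
  have hdrop' : i = p → i < j → j < n → d j < d i := fun h => h ▸ hdrop j
  have hdi := hd i
  have hdj := hd j
  have := hj.2
  split_ifs at hdi hdj <;> omega

theorem sum_le_erdosGallaiBound_of_eq_add_ite (hmono : AntitoneOn d (Set.Icc 1 n))
    (heven : Even (∑ k ∈ Icc 1 n, d k))
    (hEG : ∀ i ∈ Set.Icc 1 n, ∑ k ∈ Icc 1 i, d k ≤ erdosGallaiBound n d i)
    (hp : 1 ≤ p) (hpn : p < n) (hconst : ∀ k ∈ Icc 1 p, d k = d 1)
    (hd : ∀ k, d k = d' k + (if k = p then 1 else 0) + (if k = n then 1 else 0))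
    {i : ℕ} (hi : i ∈ Set.Icc 1 n) : ∑ k ∈ Icc 1 i, d' k ≤ erdosGallaiBound n d' i := by
  obtain ⟨hi1, hin⟩ := hi
  have hmin : ∀ k, min i (d k) = min i (d' k) + (if k = p then (if d p ≤ i then 1 else 0) else 0)
      + (if k = n then (if d n ≤ i then 1 else 0) else 0) := fun k => by
    have := hd k
    split_ifs at this ⊢ <;> subst_vars <;> omega
  have hL := sum_eq_add_ite_add_ite (s := Icc 1 i) hd
  have hT := sum_eq_add_ite_add_ite (s := Icc (i + 1) n) hmin
  simp only [mem_Icc] at hL hT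
  have hEGi := hEG i ⟨hi1, hin⟩
  unfold erdosGallaiBound at *
  rcases le_or_gt p i with hpi | hip
  · split_ifs at hL hT <;> omega
  have hdp := hconst p (mem_Icc.2 ⟨hp, le_rfl⟩)
  have hconst' : ∀ k ∈ Icc 1 (i + 1), d k = d 1 := fun k hk =>
    hconst k (by simp only [mem_Icc] at hk ⊢; omega)
  have hdn := hd n
  rw [if_neg hpn.ne', if_pos rfl] at hdn
  rcases le_or_gt (d 1) i with hdi | hdi
  · have := sum_add_two_le_erdosGallaiBound hmono heven (by omega) hconst' hdi (by omega)
    unfold erdosGallaiBound at this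
    split_ifs at hL hT <;> omega
  by_cases hdni : d n ≤ i
  · have := sum_lt_erdosGallaiBound (by omega) hconst' hdi (by omega) hdni
      (hEG (i + 1) ⟨by omega, by omega⟩)
    unfold erdosGallaiBound at this
    split_ifs at hL hT <;> omega
  · split_ifs at hL hT <;> omega

theorem isGraphical_of_forall_sum_le_erdosGallaiBound (hmono : AntitoneOn d (Set.Icc 1 n))
    (heven : Even (∑ k ∈ Icc 1 n, d k))
    (hEG : ∀ i ∈ Set.Icc 1 n, ∑ k ∈ Icc 1 i, d k ≤ erdosGallaiBound n d i) :
    IsGraphical n d := by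
  induction hN : n + ∑ k ∈ Icc 1 n, d k using Nat.strong_induction_on generalizing n d with
  | _ N ih =>
  rcases n with _ | n
  · exact ⟨⊥, inferInstance, fun v => v.elim0⟩
  by_cases hdn : d (n + 1) = 0
  · have hsucc := sum_Icc_succ_top (show 1 ≤ n + 1 by omega) d
    refine (ih _ ?_ (hmono.mono (Set.Icc_subset_Icc_right (by omega))) ?_ (fun i hi => ?_) rfl
      ).succ_of_eq_zero hdn
    · omega
    · rwa [hsucc, hdn, add_zero] at heven
    · rw [← erdosGallaiBound_succ_of_eq_zero hdn hi.2]
      exact hEG i ⟨hi.1, Nat.le_succ_of_le hi.2⟩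
  have hd1 : d 1 ≤ n := by
    simpa using (hEG 1 ⟨le_rfl, by omega⟩).trans erdosGallaiBound_one_le
  have hdn1 : d (n + 1) ≤ d 1 := hmono ⟨le_rfl, by omega⟩ ⟨by omega, le_rfl⟩ (by omega)
  obtain ⟨p, hp, hpn, hconst, hdrop⟩ :=
    exists_initial_constant_block hmono (show 2 ≤ n + 1 by omega)
  have hdp : d p = d 1 := hconst p (mem_Icc.2 ⟨hp, le_rfl⟩)
  set d' : ℕ → ℕ := fun k => d k - ((if k = p then 1 else 0) + (if k = n + 1 then 1 else 0))
  have hd : ∀ k, d k = d' k + (if k = p then 1 else 0) + (if k = n + 1 then 1 else 0) :=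
    fun k => by simp only [d']; split_ifs <;> subst_vars <;> omega
  have hsum := sum_eq_add_ite_add_ite (s := Icc 1 (n + 1)) hd
  simp only [mem_Icc] at hsum
  rw [if_pos ⟨hp, by omega⟩, if_pos ⟨by omega, le_rfl⟩] at hsum
  refine IsGraphical.of_eq_add_ite (ih _ ?_ (antitoneOn_of_eq_add_ite hmono hpn hdrop hd) ?_
      (fun i hi => sum_le_erdosGallaiBound_of_eq_add_ite hmono heven hEG hp hpn hconst hd hi) rfl)
    hp hpn hd (by omega) fun k hk _ => hmono hk ⟨by omega, le_rfl⟩ hk.2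
  · omega
  · obtain ⟨a, ha⟩ := heven
    exact ⟨a - 1, by omega⟩

end ErdosGallai

theorem erdos_gallai_shortened_general (n : ℕ) (b : ℕ → ℕ)
    (hmono : ∀ i j, 1 ≤ i → i ≤ j → j ≤ n → b j ≤ b i) :
    IsGraphical n b ↔
      (Even (∑ k ∈ Finset.Icc 1 n, b k) ∧
        ∀ i, 1 ≤ i → i ≤ n → i * (i - 1) < ∑ k ∈ Finset.Icc 1 i, b k →
          (∑ k ∈ Finset.Icc 1 i, b k) ≤
            i * (i - 1) + ∑ k ∈ Finset.Icc (i + 1) n, min i (b k)) := by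
  refine ⟨fun h => ⟨h.even_sum, fun i _ hin _ => h.sum_le_erdosGallaiBound hin⟩,
    fun ⟨heven, hshort⟩ => ?_⟩
  refine isGraphical_of_forall_sum_le_erdosGallaiBound
    (fun i hi j hj hij => hmono i j hi.1 hij hj.2) heven fun i hi => ?_
  by_cases hc : i * (i - 1) < ∑ k ∈ Icc 1 i, b k
  · exact hshort i hi.1 hi.2 hc
  · exact (not_lt.1 hc).trans (Nat.le_add_right _ _)

/-- The shortened Erdős–Gallai criterion of Tripathi and Vijay. -/
theorem erdos_gallai_shortened (n : ℕ) (hn : 1 ≤ n) (b : ℕ → ℕ)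
    (hmono : ∀ i j, 1 ≤ i → i ≤ j → j ≤ n → b j ≤ b i)
    (hbound : b 1 ≤ n - 1) :
    IsGraphical n b ↔
      (Even (∑ k ∈ Finset.Icc 1 n, b k) ∧
        ∀ i, 1 ≤ i → i ≤ n → i * (i - 1) < ∑ k ∈ Finset.Icc 1 i, b k →
          (∑ k ∈ Finset.Icc 1 i, b k) ≤
            i * (i - 1) + ∑ k ∈ Finset.Icc (i + 1) n, min i (b k)) :=
  erdos_gallai_shortened_general n b hmono
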